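/- arXiv:2508.11508 — 6 statements merged into one kernel-verified Lean document; each statement's English description precedes it below -/
import Mathlib

section
/- Let V be a real inner product space, let c > 0 and b > 0, and let λ_τ, u̇_τ ∈ V. Then b·(λ_τ + c·u̇_τ) − max(b, ‖λ_τ + c·u̇_τ‖)·λ_τ = 0 holds if and only if the Coulomb friction conditions with friction bound b hold: ‖λ_τ‖ ≤ b; if ‖λ_τ‖ < b then u̇_τ = 0; and if ‖λ_τ‖ = b then there exists ζ ≥ 0 with u̇_τ = ζ·λ_τ. -/
/-- For a real inner product space `V`, `c > 0`, `b > 0` and `λ_τ, u̇_τ ∈ V`,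
the tangential complementarity equation
`b·(λ_τ + c·u̇_τ) − max(b, ‖λ_τ + c·u̇_τ‖)·λ_τ = 0`
holds iff the Coulomb friction conditions with friction bound `b` hold. -/
theorem tangential_complementarity_iff_coulomb
    {V : Type*} [NormedAddCommGroup V] [InnerProductSpace ℝ V]
    (c b : ℝ) (hc : 0 < c) (hb : 0 < b) (lamT udotT : V) :
    b • (lamT + c • udotT) - (max b ‖lamT + c • udotT‖) • lamT = 0 ↔
      (‖lamT‖ ≤ b ∧ (‖lamT‖ < b → udotT = 0) ∧
        (‖lamT‖ = b → ∃ ζ : ℝ, 0 ≤ ζ ∧ udotT = ζ • lamT)) := by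
  set z : V := lamT + c • udotT with hzdef
  rw [sub_eq_zero]
  constructor
  · intro h
    rcases le_or_gt ‖z‖ b with hle | hgt
    · rw [max_eq_left hle] at h
      have hzl : z = lamT := smul_right_injective V hb.ne' h
      have hu : udotT = 0 := by
        have hcu : c • udotT = 0 := by
          have h' : lamT + c • udotT = lamT + 0 := by
            rw [add_zero]; exact hzdef.symm.trans hzl
          exact add_left_cancel h'
        rcases smul_eq_zero.mp hcu with h' | h'
        · exact absurd h' hc.ne'
        · exact h'
      have hln : ‖lamT‖ ≤ b := by rw [← hzl]; exact hle
      exact ⟨hln, fun _ => hu, fun _ => ⟨0, le_refl 0, by simp [hu]⟩⟩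
    · rw [max_eq_right hgt.le] at h
      have hznz : ‖z‖ ≠ 0 := (hb.trans hgt).ne'
      have hnorm : b * ‖z‖ = ‖z‖ * ‖lamT‖ := by
        have := congrArg norm h
        rwa [norm_smul, norm_smul, Real.norm_of_nonneg hb.le,
          Real.norm_of_nonneg (norm_nonneg z)] at this
      have hlb : ‖lamT‖ = b :=
        mul_left_cancel₀ hznz (show ‖z‖ * ‖lamT‖ = ‖z‖ * b by linarith)
      -- z = (‖z‖ / b) • lamT
      have hz2 : z = (‖z‖ / b) • lamT := by
        have : b⁻¹ • (b • z) = b⁻¹ • (‖z‖ • lamT) := congrArg _ h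
        rwa [smul_smul, smul_smul, inv_mul_cancel₀ hb.ne', one_smul,
          ← div_eq_inv_mul] at this
      set ζ : ℝ := (‖z‖ / b - 1) / c with hζdef
      have hζnn : 0 ≤ ζ := by
        apply div_nonneg _ hc.le
        have : 1 ≤ ‖z‖ / b := (one_le_div hb).mpr hgt.le
        linarith
      have hu : udotT = ζ • lamT := by
        have hcu : c • udotT = (‖z‖ / b - 1) • lamT := by
          have : z - lamT = (‖z‖ / b - 1) • lamT := by
            conv_lhs => rw [hz2]
            rw [sub_smul, one_smul]
          rw [← this, hzdef, add_sub_cancel_left]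
        have : c⁻¹ • (c • udotT) = c⁻¹ • ((‖z‖ / b - 1) • lamT) := congrArg _ hcu
        rwa [smul_smul, smul_smul, inv_mul_cancel₀ hc.ne', one_smul,
          ← div_eq_inv_mul] at this
      refine ⟨hlb.le, fun hlt => absurd hlb hlt.ne, fun _ => ⟨ζ, hζnn, hu⟩⟩
  · rintro ⟨h1, h2, h3⟩
    rcases lt_or_eq_of_le h1 with hlt | heq
    · have hu : udotT = 0 := h2 hlt
      have hzl : z = lamT := by rw [hzdef, hu, smul_zero, add_zero]
      rw [hzl, max_eq_left hlt.le]
    · obtain ⟨ζ, hζ, hu⟩ := h3 heq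
      have hzl : z = (1 + c * ζ) • lamT := by
        rw [hzdef, hu, smul_smul, add_smul, one_smul]
      have hcz : 0 ≤ c * ζ := mul_nonneg hc.le hζ
      have hnz : ‖z‖ = (1 + c * ζ) * b := by
        rw [hzl, norm_smul, Real.norm_of_nonneg (by linarith), heq]
      have hbz : b ≤ ‖z‖ := by
        rw [hnz]; nlinarith
      rw [max_eq_right hbz, hnz, hzl, smul_smul, mul_comm]
end

section
/- Let V be a real inner product space, let c > 0 and b > 0, and let λ_τ, u̇_τ ∈ V. If b·(λ_τ + c·u̇_τ) = max(b, ‖λ_τ + c·u̇_τ‖)·λ_τ and ‖λ_τ + c·u̇_τ‖ > b, then ‖λ_τ‖ = b and there exists ζ > 0 such that u̇_τ = ζ·λ_τ (the generalized slip state recovers the physical slip conditions). -/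
/-- Generalized slip state recovers the physical slip conditions. -/
theorem generalized_slip_recovers_slip
    {V : Type*} [NormedAddCommGroup V] [InnerProductSpace ℝ V]
    (c b : ℝ) (hc : 0 < c) (hb : 0 < b) (lamT udotT : V)
    (heq : b • (lamT + c • udotT) = (max b ‖lamT + c • udotT‖) • lamT)
    (hgt : b < ‖lamT + c • udotT‖) :
    ‖lamT‖ = b ∧ ∃ ζ : ℝ, 0 < ζ ∧ udotT = ζ • lamT := by
  set n := ‖lamT + c • udotT‖ with hn
  have hmax : max b n = n := max_eq_right hgt.le
  rw [hmax] at heq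
  have hnpos : 0 < n := hb.trans hgt
  have hnorm : b * n = n * ‖lamT‖ := by
    have h := congrArg norm heq
    rw [norm_smul, norm_smul, Real.norm_eq_abs, Real.norm_eq_abs,
      abs_of_pos hb, abs_of_pos hnpos, ← hn] at h
    exact h
  have hlam : ‖lamT‖ = b := by
    have := mul_left_cancel₀ hnpos.ne' (by linarith [hnorm] : n * ‖lamT‖ = n * b)
    exact this
  have hbc : (b * c : ℝ) ≠ 0 := by positivity
  refine ⟨hlam, (n - b) / (b * c), div_pos (sub_pos.mpr hgt) (by positivity), ?_⟩
  have hstep : b • lamT + (b * c) • udotT = n • lamT := by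
    rw [smul_add, smul_smul] at heq; exact heq
  have h2 : (b * c) • udotT = (n - b) • lamT := by
    rw [sub_smul]
    exact eq_sub_of_add_eq' hstep
  have h3 := congrArg (fun v => (b * c)⁻¹ • v) h2
  simp only [smul_smul, inv_mul_cancel₀ hbc, one_smul] at h3
  rw [h3]
  congr 1
  field_simp
end

section
/- Let V be a real inner product space, let F > 0, c > 0, and let λ_n ≤ 0 be a real number with friction bound b := −F·λ_n; set χ := 1 if b ≤ 0 and χ := 0 if b > 0. Then for λ_τ, u̇_τ ∈ V, the equation χ·λ_τ + (1 − χ)·[b·(λ_τ + c·u̇_τ) − max(b, ‖λ_τ + c·u̇_τ‖)·λ_τ] = 0 holds if and only if the Coulomb friction law holds: if λ_n = 0 then λ_τ = 0; otherwise ‖λ_τ‖ ≤ b, ‖λ_τ‖ < b implies u̇_τ = 0, and ‖λ_τ‖ = b implies there exists ζ ≥ 0 with u̇_τ = ζ·λ_τ. -/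
/-- For `λ_n ≤ 0`, friction bound `b = −F·λ_n` and characteristic function `χ`
(`χ = 1` if `b ≤ 0`, else `χ = 0`), the full tangential complementarity equation
`χ·λ_τ + (1 − χ)·[b·(λ_τ + c·u̇_τ) − max(b, ‖λ_τ + c·u̇_τ‖)·λ_τ] = 0`
holds iff the Coulomb friction law holds. -/
theorem full_tangential_complementarity_iff_coulomb_law
    {V : Type*} [NormedAddCommGroup V] [InnerProductSpace ℝ V]
    (F c : ℝ) (hF : 0 < F) (hc : 0 < c) (lamN : ℝ) (hlamN : lamN ≤ 0)
    (b : ℝ) (hb : b = -F * lamN)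
    (χ : ℝ) (hχ : χ = if b ≤ 0 then 1 else 0)
    (lamT udotT : V) :
    χ • lamT + (1 - χ) •
        (b • (lamT + c • udotT) - (max b ‖lamT + c • udotT‖) • lamT) = 0 ↔
      ((lamN = 0 → lamT = 0) ∧
        (lamN ≠ 0 →
          ‖lamT‖ ≤ b ∧ (‖lamT‖ < b → udotT = 0) ∧
            (‖lamT‖ = b → ∃ ζ : ℝ, 0 ≤ ζ ∧ udotT = ζ • lamT))) := by
  have hbnn : 0 ≤ b := by rw [hb]; nlinarith
  by_cases h0 : b ≤ 0
  · -- b = 0, lamN = 0, χ = 1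
    have hb0 : b = 0 := le_antisymm h0 hbnn
    have hln : lamN = 0 := by
      by_contra h
      have : lamN < 0 := lt_of_le_of_ne hlamN h
      nlinarith [hb.symm.trans hb0]
    simp [hχ, h0, hln]
  · push_neg at h0
    have hln : lamN ≠ 0 := by
      intro h; rw [h, mul_zero] at hb; rw [hb] at h0; exact lt_irrefl 0 h0
    set w := lamT + c • udotT with hw
    set m := max b ‖w‖ with hm
    have hbm : b ≤ m := le_max_left _ _
    have hwm : ‖w‖ ≤ m := le_max_right _ _
    have hmpos : 0 < m := lt_of_lt_of_le h0 hbm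
    simp only [hχ, if_neg (not_le.mpr h0), zero_smul, zero_add, sub_zero, one_smul]
    constructor
    · intro h
      have heq : b • w = m • lamT := sub_eq_zero.mp h
      have hlam : lamT = (b / m) • w := by
        have h1 : lamT = m⁻¹ • (m • lamT) := (inv_smul_smul₀ hmpos.ne' lamT).symm
        rw [h1, ← heq, smul_smul, ← div_eq_inv_mul]
      have hnorm : ‖lamT‖ = (b / m) * ‖w‖ := by
        rw [hlam, norm_smul, Real.norm_eq_abs,
          abs_of_nonneg (div_nonneg h0.le hmpos.le)]
      have key : ‖lamT‖ * m = b * ‖w‖ := by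
        rw [hnorm]; field_simp
      have hle : ‖lamT‖ ≤ b := by nlinarith
      refine ⟨fun h => absurd h hln, fun _ => ⟨hle, ?_, ?_⟩⟩
      · intro hlt
        have hwltm : ‖w‖ < m := by nlinarith
        have hmb : m = b := by
          rcases max_choice b ‖w‖ with h' | h'
          · exact h'.symm ▸ rfl
          · exact absurd (hm.trans h') (by intro hh; rw [hh] at hwltm; exact lt_irrefl _ hwltm)
        rw [hmb] at heq
        have hwl : w = lamT := smul_right_injective V h0.ne' heq
        have : c • udotT = 0 := by
          have := hwl
          rw [hw] at this
          exact by
            have h2 : lamT + c • udotT = lamT + 0 := by rw [this, add_zero]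
            exact add_left_cancel h2
        exact (smul_eq_zero.mp this).resolve_left hc.ne'
      · intro _
        refine ⟨(m - b) / (b * c), div_nonneg (by linarith) (by positivity), ?_⟩
        have hkey : (b * c) • udotT = (m - b) • lamT := by
          have h2 : b • lamT + (b * c) • udotT = m • lamT := by
            rw [← smul_smul, ← smul_add, ← hw]; exact heq
          have : (b * c) • udotT = m • lamT - b • lamT := by
            rw [← h2]; abel
          rw [this, ← sub_smul]
        have : udotT = (b * c)⁻¹ • ((b * c) • udotT) :=
          (inv_smul_smul₀ (by positivity) udotT).symm
        rw [this, hkey, smul_smul]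
        congr 1
        field_simp
    · rintro ⟨-, h⟩
      obtain ⟨hle, hlt, heq⟩ := h hln
      rcases lt_or_eq_of_le hle with hlt' | heq'
      · have hu : udotT = 0 := hlt hlt'
        have hwl : w = lamT := by rw [hw, hu, smul_zero, add_zero]
        have hmb : m = b := by rw [hm, hwl, max_eq_left hlt'.le]
        rw [hwl, hmb, sub_self]
      · obtain ⟨ζ, hζ, hu⟩ := heq heq'
        have hwl : w = (1 + c * ζ) • lamT := by
          rw [hw, hu, smul_smul, add_smul, one_smul]
        have hpos : (0:ℝ) ≤ 1 + c * ζ := by positivity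
        have hnw : ‖w‖ = (1 + c * ζ) * b := by
          rw [hwl, norm_smul, Real.norm_eq_abs, abs_of_nonneg hpos, heq']
        have hmb : m = (1 + c * ζ) * b := by
          rw [hm, hnw]
          exact max_eq_right (by nlinarith [mul_nonneg (mul_nonneg hc.le hζ) h0.le])
        rw [hwl, hmb, smul_smul, mul_comm, sub_self]
end

section
/- Let V be a real inner product space, let F > 0 and c > 0, and let λ_n, d ∈ ℝ and λ_τ, u̇_τ ∈ V; set b := −F·λ_n and χ := 1 if b ≤ 0, χ := 0 if b > 0. Then the full frictional contact conditions [d ≥ 0, λ_n ≤ 0, λ_n·d = 0, and the Coulomb friction law: λ_n = 0 implies λ_τ = 0, and if λ_n < 0 then ‖λ_τ‖ ≤ b, ‖λ_τ‖ < b implies u̇_τ = 0, and ‖λ_τ‖ = b implies ∃ζ ≥ 0 with u̇_τ = ζ·λ_τ] hold if and only if both complementarity equations hold: λ_n + max(0, −λ_n − c·d) = 0 and χ·λ_τ + (1 − χ)·[b·(λ_τ + c·u̇_τ) − max(b, ‖λ_τ + c·u̇_τ‖)·λ_τ] = 0. -/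
/-- The full frictional contact conditions (KKT nonpenetration plus the
Coulomb friction law) hold iff both the normal and the full tangential
complementarity equations hold. -/
theorem contact_conditions_iff_complementarity_equations
    {V : Type*} [NormedAddCommGroup V] [InnerProductSpace ℝ V]
    (F c : ℝ) (hF : 0 < F) (hc : 0 < c) (lamN d : ℝ) (lamT udotT : V)
    (b : ℝ) (hb : b = -F * lamN)
    (χ : ℝ) (hχ : χ = if b ≤ 0 then 1 else 0) :
    (0 ≤ d ∧ lamN ≤ 0 ∧ lamN * d = 0 ∧
      (lamN = 0 → lamT = 0) ∧
      (lamN < 0 →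
        ‖lamT‖ ≤ b ∧ (‖lamT‖ < b → udotT = 0) ∧
          (‖lamT‖ = b → ∃ ζ : ℝ, 0 ≤ ζ ∧ udotT = ζ • lamT))) ↔
    (lamN + max 0 (-lamN - c * d) = 0 ∧
      χ • lamT + (1 - χ) •
          (b • (lamT + c • udotT) - (max b ‖lamT + c • udotT‖) • lamT) = 0) := by
  have hbiff : b ≤ 0 ↔ 0 ≤ lamN := by
    rw [hb]; constructor <;> intro h <;> nlinarith
  constructor
  · rintro ⟨hd, hln, hcomp, h0, hneg⟩
    constructor
    · rcases mul_eq_zero.mp hcomp with h | h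
      · rw [h, max_eq_left (by nlinarith)]; ring
      · rw [h, max_eq_right (by nlinarith)]; ring
    · rcases hln.lt_or_eq with hlt | heq
      · -- lamN < 0, b > 0, χ = 0
        have hbpos : 0 < b := by rw [hb]; nlinarith
        have hχ0 : χ = 0 := by rw [hχ, if_neg (by linarith)]
        rw [hχ0]
        simp only [zero_smul, sub_zero, zero_add, one_smul]
        obtain ⟨hle, hltc, heqc⟩ := hneg hlt
        rcases hle.lt_or_eq with hlt2 | heq2
        · have hu : udotT = 0 := hltc hlt2
          rw [hu, smul_zero, add_zero, max_eq_left (le_of_lt hlt2), sub_self]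
        · obtain ⟨ζ, hζ, hu⟩ := heqc heq2
          have hs : lamT + c • udotT = (1 + c * ζ) • lamT := by
            rw [hu, smul_smul]
            module
          have hmax : max ‖lamT‖ ((1 + c * ζ) * ‖lamT‖) = (1 + c * ζ) * ‖lamT‖ := by
            apply max_eq_right
            nlinarith [norm_nonneg lamT, mul_nonneg (mul_nonneg hc.le hζ) (norm_nonneg lamT)]
          rw [hs, norm_smul, Real.norm_eq_abs,
            abs_of_nonneg (by nlinarith : (0:ℝ) ≤ 1 + c * ζ), ← heq2, hmax,
            smul_smul, mul_comm ‖lamT‖]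
          exact sub_self _
      · -- lamN = 0
        have hb0 : b = 0 := by rw [hb, heq]; ring
        have hχ1 : χ = 1 := by rw [hχ, if_pos (by linarith)]
        rw [hχ1, h0 heq]
        simp
  · rintro ⟨hn, ht⟩
    have hln : lamN ≤ 0 := by
      have := le_max_left 0 (-lamN - c * d)
      linarith
    have hnormal : 0 ≤ d ∧ lamN * d = 0 := by
      rcases le_or_gt (-lamN - c * d) 0 with h | h
      · rw [max_eq_left h] at hn
        have : lamN = 0 := by linarith
        constructor
        · nlinarith
        · rw [this]; ring
      · rw [max_eq_right (le_of_lt h)] at hn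
        have hd0 : d = 0 := by nlinarith
        exact ⟨le_of_eq hd0.symm, by rw [hd0]; ring⟩
    refine ⟨hnormal.1, hln, hnormal.2, ?_, ?_⟩
    · intro h
      have hb0 : b = 0 := by rw [hb, h]; ring
      have hχ1 : χ = 1 := by rw [hχ, if_pos (by linarith)]
      rw [hχ1] at ht
      simpa using ht
    · intro hlt
      have hbpos : 0 < b := by rw [hb]; nlinarith
      have hχ0 : χ = 0 := by rw [hχ, if_neg (by linarith)]
      rw [hχ0] at ht
      simp only [zero_smul, sub_zero, zero_add, one_smul] at ht
      set s := lamT + c • udotT with hsdef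
      set m := max b ‖s‖ with hmdef
      have hbm : b ≤ m := le_max_left _ _
      have hmpos : 0 < m := lt_of_lt_of_le hbpos hbm
      have hsm : ‖s‖ ≤ m := le_max_right _ _
      have hkey : b • s = m • lamT := by
        have := sub_eq_zero.mp ht
        exact this
      -- lamT = (b/m) • s
      have hlamT : lamT = (b / m) • s := by
        have : m⁻¹ • (b • s) = m⁻¹ • (m • lamT) := by rw [hkey]
        rw [smul_smul, smul_smul, inv_mul_cancel₀ (ne_of_gt hmpos), one_smul] at this
        rw [← this, div_eq_inv_mul]
      have hnorm : ‖lamT‖ = (b / m) * ‖s‖ := by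
        rw [hlamT, norm_smul, Real.norm_eq_abs,
          abs_of_nonneg (by positivity : (0:ℝ) ≤ b / m)]
      have hle : ‖lamT‖ ≤ b := by
        rw [hnorm]
        calc (b / m) * ‖s‖ ≤ (b / m) * m := by
              apply mul_le_mul_of_nonneg_left hsm (by positivity)
          _ = b := by field_simp
      -- s = (m/b) • lamT
      have hsval : s = (m / b) • lamT := by
        have : b⁻¹ • (b • s) = b⁻¹ • (m • lamT) := by rw [hkey]
        rw [smul_smul, smul_smul, inv_mul_cancel₀ (ne_of_gt hbpos), one_smul] at this
        rw [this, div_eq_inv_mul]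
      have hu : udotT = (c⁻¹ * (m / b - 1)) • lamT := by
        have h1 : c • udotT = s - lamT := by rw [hsdef]; abel
        have h2 : c • udotT = (m / b - 1) • lamT := by
          rw [h1, hsval, sub_smul, one_smul]
        have := congrArg (fun x => c⁻¹ • x) h2
        simpa [smul_smul, inv_mul_cancel₀ (ne_of_gt hc)] using this
      refine ⟨hle, ?_, ?_⟩
      · intro hlt2
        have hm_eq : m = b := by
          rcases max_cases b ‖s‖ with ⟨h1, _⟩ | ⟨h1, h2⟩
          · exact h1
          · exfalso
            have hm : m = ‖s‖ := hmdef.trans h1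
            have hs0 : ‖s‖ ≠ 0 := ne_of_gt (lt_trans hbpos h2)
            rw [hm, div_mul_cancel₀ _ hs0] at hnorm
            linarith
        rw [hu, hm_eq, div_self (ne_of_gt hbpos)]
        simp
      · intro _
        refine ⟨c⁻¹ * (m / b - 1), ?_, hu⟩
        have : 1 ≤ m / b := (one_le_div hbpos).mpr hbm
        have hcinv : 0 ≤ c⁻¹ := by positivity
        nlinarith
end

section
/- Let V be a real inner product space, let c > 0 and F > 0, let λ_n, d ∈ ℝ and λ_τ, u̇_τ ∈ V, set b := −F·λ_n, and suppose the full contact conditions hold: d ≥ 0, λ_n ≤ 0, λ_n·d = 0, and the Coulomb friction law (λ_n = 0 implies λ_τ = 0; if λ_n < 0 then ‖λ_τ‖ ≤ b, ‖λ_τ‖ < b implies u̇_τ = 0, and ‖λ_τ‖ = b implies ∃ζ ≥ 0 with u̇_τ = ζ·λ_τ). Then each physical contact state lies in the corresponding generalized contact state: (i) if λ_n = 0 then −λ_n − c·d ≤ 0 (generalized Open); (ii) if λ_n < 0 and ‖λ_τ‖ < b then b > 0 and ‖λ_τ + c·u̇_τ‖ < b (generalized Stick); (iii) if λ_n < 0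 and ‖λ_τ‖ = b then b > 0 and ‖λ_τ + c·u̇_τ‖ ≥ b (generalized Slip). -/
/-- Under the full contact conditions, each physical contact state lies in the
corresponding generalized contact state (Open, Stick, Slip). -/
theorem physical_states_in_generalized_states
    {V : Type*} [NormedAddCommGroup V] [InnerProductSpace ℝ V]
    (c F : ℝ) (hc : 0 < c) (hF : 0 < F)
    (lamN d : ℝ) (lamT udotT : V) (b : ℝ) (hb : b = -F * lamN)
    (hd : 0 ≤ d) (hlamN : lamN ≤ 0) (hcompl : lamN * d = 0)
    (hopen : lamN = 0 → lamT = 0)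
    (hfric : lamN < 0 →
      ‖lamT‖ ≤ b ∧ (‖lamT‖ < b → udotT = 0) ∧
        (‖lamT‖ = b → ∃ ζ : ℝ, 0 ≤ ζ ∧ udotT = ζ • lamT)) :
    (lamN = 0 → -lamN - c * d ≤ 0) ∧
    (lamN < 0 → ‖lamT‖ < b → 0 < b ∧ ‖lamT + c • udotT‖ < b) ∧
    (lamN < 0 → ‖lamT‖ = b → 0 < b ∧ b ≤ ‖lamT + c • udotT‖) := by
  refine ⟨?_, ?_, ?_⟩
  · intro h; rw [h]; simp; positivity
  · intro hn hlt
    have hbpos : 0 < b := by rw [hb]; nlinarith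
    have h0 := (hfric hn).2.1 hlt
    refine ⟨hbpos, ?_⟩
    simpa [h0] using hlt
  · intro hn heq
    have hbpos : 0 < b := by rw [hb]; nlinarith
    obtain ⟨ζ, hζ, hu⟩ := (hfric hn).2.2 heq
    refine ⟨hbpos, ?_⟩
    have : lamT + c • udotT = (1 + c * ζ) • lamT := by
      rw [hu, smul_smul, add_smul, one_smul]
    rw [this, norm_smul, Real.norm_eq_abs, abs_of_pos (by nlinarith), heq]
    nlinarith [mul_nonneg (mul_nonneg hc.le hζ) hbpos.le]
end

section
/- Let V be a real inner product space, let c > 0 and b > 0, and let λ_τ, u̇_τ ∈ V satisfy b·(λ_τ + c·u̇_τ) = max(b, ‖λ_τ + c·u̇_τ‖)·λ_τ. Then ‖λ_τ‖ ≤ b; i.e. any solution of the tangential complementarity equation with positive friction bound automatically respects the Coulomb friction bound. -/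
theorem norm_le_of_smul_eq_smul {E : Type*} [SeminormedAddCommGroup E] [NormedSpace ℝ E]
    {a b : ℝ} {x y : E} (hb : 0 ≤ b) (ha : 0 < a) (hy : ‖y‖ ≤ a) (h : b • y = a • x) :
    ‖x‖ ≤ b := by
  have hnorm : a * ‖x‖ = b * ‖y‖ := by
    simpa [norm_smul, abs_of_nonneg hb, abs_of_pos ha] using (congrArg norm h).symm
  refine le_of_mul_le_mul_left ?_ ha
  calc a * ‖x‖ = b * ‖y‖ := hnorm
    _ ≤ b * a := mul_le_mul_of_nonneg_left hy hb
    _ = a * b := mul_comm b a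

theorem tangential_complementarity_respects_friction_bound_general
    {V : Type*} [NormedAddCommGroup V] [InnerProductSpace ℝ V]
    (c b : ℝ) (hb : 0 < b) (lamT udotT : V)
    (heq : b • (lamT + c • udotT) = (max b ‖lamT + c • udotT‖) • lamT) :
    ‖lamT‖ ≤ b :=
  norm_le_of_smul_eq_smul hb.le (hb.trans_le (le_max_left _ _)) (le_max_right _ _) heq

/-- Any solution of the tangential complementarity equation with positive
friction bound automatically respects the Coulomb friction bound `‖λ_τ‖ ≤ b`. -/
theorem tangential_complementarity_respects_friction_bound
    {V : Type*} [NormedAddCommGroup V] [InnerProductSpace ℝ V]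
    (c b : ℝ) (hc : 0 < c) (hb : 0 < b) (lamT udotT : V)
    (heq : b • (lamT + c • udotT) = (max b ‖lamT + c • udotT‖) • lamT) :
    ‖lamT‖ ≤ b :=
  tangential_complementarity_respects_friction_bound_general c b hb lamT udotT heq
end
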